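/- Let k be a Noetherian ring containing a field, R = k[x_1,…,x_n], I = ⟨f_1,…,f_r⟩, A = R/I, and let 𝔭 be a minimal prime of the (n−r)-Fitting ideal J_r of Ω_{A/k}. Then Leap_k(A_𝔭) is finite, of cardinality at most dim_K(Der_k(A_𝔭)/𝔭^M Der_k(A_𝔭)), where K is the residue field of 𝔭 and M is the smallest positive integer with 𝔭^M Der_k(A_𝔭) ⊆ IDer_k(A_𝔭). -/

import Mathlib

open scoped BigOperators

section HS
variable (k A : Type*) [CommRing k] [CommRing A] [Algebra k A]

/-- `D` is a Hasse–Schmidt derivation of `A` over `k` of length `m`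
(`m = ⊤` means length `∞`): `D 0 = id` and the Leibniz rule holds in each degree `≤ m`. -/
def IsHSDeriv (m : ℕ∞) (D : ℕ → A →ₗ[k] A) : Prop :=
  D 0 = LinearMap.id ∧
  ∀ α : ℕ, (α : ℕ∞) ≤ m → ∀ x y : A,
    D α (x * y) = ∑ ij ∈ Finset.HasAntidiagonal.antidiagonal α, D ij.1 x * D ij.2 y

/-- A derivation is `m`-integrable if it extends to a Hasse–Schmidt derivation of length `m`. -/
def IsIntegrable (m : ℕ∞) (δ : Derivation k A A) : Prop :=
  ∃ D : ℕ → A →ₗ[k] A, IsHSDeriv k A m D ∧ D 1 = δ.toLinearMap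

/-- The set of leaps of `A` over `k`: those `s ≥ 2` where some derivation is
`(s-1)`-integrable but not `s`-integrable. -/
def LeapSet : Set ℕ :=
  {s | 2 ≤ s ∧ ∃ δ : Derivation k A A,
    IsIntegrable k A ((s - 1 : ℕ) : ℕ∞) δ ∧ ¬ IsIntegrable k A (s : ℕ∞) δ}

end HS

section Aux
variable {k A : Type*} [CommRing k] [CommRing A] [Algebra k A]

theorem IsHSDeriv.mono {m m' : ℕ∞} (h : m' ≤ m) {D : ℕ → A →ₗ[k] A}
    (hD : IsHSDeriv k A m D) : IsHSDeriv k A m' D :=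
  ⟨hD.1, fun α hα => hD.2 α (hα.trans h)⟩

theorem IsIntegrable.mono {m m' : ℕ∞} (h : m' ≤ m) {δ : Derivation k A A}
    (hδ : IsIntegrable k A m δ) : IsIntegrable k A m' δ := by
  obtain ⟨D, hD, h1⟩ := hδ; exact ⟨D, hD.mono h, h1⟩

theorem isIntegrable_zero (m : ℕ∞) : IsIntegrable k A m (0 : Derivation k A A) := by
  refine ⟨fun i => if i = 0 then LinearMap.id else 0, ⟨if_pos rfl, ?_⟩, by simp⟩
  intro α hα x y
  rcases Nat.eq_zero_or_pos α with rfl | hpos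
  · simp
  · simp only [if_neg hpos.ne', LinearMap.zero_apply]
    rw [eq_comm]
    refine Finset.sum_eq_zero fun ij hij => ?_
    rw [Finset.HasAntidiagonal.mem_antidiagonal] at hij
    rcases Nat.eq_zero_or_pos ij.1 with h1 | h1
    · have h2 : ij.2 ≠ 0 := by omega
      simp [h2]
    · simp [h1.ne']

theorem IsIntegrable.smul (a : A) {m : ℕ∞} {δ : Derivation k A A}
    (hδ : IsIntegrable k A m δ) : IsIntegrable k A m (a • δ) := by
  obtain ⟨D, ⟨h0, hL⟩, h1⟩ := hδ
  refine ⟨fun i => a ^ i • D i, ⟨by simp [h0], ?_⟩, ?_⟩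
  · intro α hα x y
    simp only [LinearMap.smul_apply]
    rw [hL α hα, Finset.smul_sum]
    refine Finset.sum_congr rfl fun ij hij => ?_
    rw [Finset.HasAntidiagonal.mem_antidiagonal] at hij
    simp only [smul_eq_mul, ← hij, pow_add]
    ring
  · ext x
    simp [h1]

theorem IsIntegrable.add {m : ℕ∞} {δ₁ δ₂ : Derivation k A A}
    (h₁ : IsIntegrable k A m δ₁) (h₂ : IsIntegrable k A m δ₂) :
    IsIntegrable k A m (δ₁ + δ₂) := by
  obtain ⟨D, ⟨hD0, hDL⟩, hD1⟩ := h₁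
  obtain ⟨E, ⟨hE0, hEL⟩, hE1⟩ := h₂
  refine ⟨fun nn => ∑ ij ∈ Finset.HasAntidiagonal.antidiagonal nn, D ij.1 ∘ₗ E ij.2, ⟨?_, ?_⟩, ?_⟩
  · simp [hD0, hE0]
  · intro α hα x y
    simp only [LinearMap.sum_apply, LinearMap.comp_apply]
    have cast_le : ∀ i : ℕ, i ≤ α → (i : ℕ∞) ≤ m := fun i hi =>
      le_trans (by exact_mod_cast hi) hα
    calc ∑ ij ∈ Finset.HasAntidiagonal.antidiagonal α, D ij.1 (E ij.2 (x * y))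
        = ∑ ij ∈ Finset.HasAntidiagonal.antidiagonal α, ∑ p ∈
            Finset.HasAntidiagonal.antidiagonal ij.2 ×ˢ Finset.HasAntidiagonal.antidiagonal ij.1,
              D p.2.1 (E p.1.1 x) * D p.2.2 (E p.1.2 y) := by
          refine Finset.sum_congr rfl fun ij hij => ?_
          rw [Finset.HasAntidiagonal.mem_antidiagonal] at hij
          rw [hEL ij.2 (cast_le ij.2 (by omega)) x y, map_sum]
          rw [Finset.sum_product]
          refine Finset.sum_congr rfl fun ab hab => ?_
          exact hDL ij.1 (cast_le ij.1 (by omega)) (E ab.1 x) (E ab.2 y)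
      _ = ∑ ij ∈ Finset.HasAntidiagonal.antidiagonal α, ∑ p ∈
            Finset.HasAntidiagonal.antidiagonal ij.1 ×ˢ Finset.HasAntidiagonal.antidiagonal ij.2,
              D p.1.1 (E p.1.2 x) * D p.2.1 (E p.2.2 y) := by
          rw [Finset.sum_sigma', Finset.sum_sigma']
          refine Finset.sum_nbij'
            (fun x => ⟨(x.2.2.1 + x.2.1.1, x.2.2.2 + x.2.1.2), ((x.2.2.1, x.2.1.1), (x.2.2.2, x.2.1.2))⟩)
            (fun x => ⟨(x.2.1.1 + x.2.2.1, x.2.1.2 + x.2.2.2), ((x.2.1.2, x.2.2.2), (x.2.1.1, x.2.2.1))⟩)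
            ?_ ?_ ?_ ?_ ?_
          · rintro ⟨⟨i, j⟩, ⟨⟨a, b⟩, ⟨c, d⟩⟩⟩ h
            simp only [Finset.mem_sigma, Finset.mem_product, Finset.HasAntidiagonal.mem_antidiagonal] at h ⊢
            obtain ⟨h1, h2, h3⟩ := h
            exact ⟨by omega, trivial, trivial⟩
          · rintro ⟨⟨p, q⟩, ⟨⟨c, a⟩, ⟨d, b⟩⟩⟩ h
            simp only [Finset.mem_sigma, Finset.mem_product, Finset.HasAntidiagonal.mem_antidiagonal] at h ⊢
            obtain ⟨h1, h2, h3⟩ := h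
            exact ⟨by omega, trivial, trivial⟩
          · rintro ⟨⟨i, j⟩, ⟨⟨a, b⟩, ⟨c, d⟩⟩⟩ h
            simp only [Finset.mem_sigma, Finset.mem_product, Finset.HasAntidiagonal.mem_antidiagonal] at h
            obtain ⟨h1, h2, h3⟩ := h
            subst h2 h3
            rfl
          · rintro ⟨⟨p, q⟩, ⟨⟨c, a⟩, ⟨d, b⟩⟩⟩ h
            simp only [Finset.mem_sigma, Finset.mem_product, Finset.HasAntidiagonal.mem_antidiagonal] at h
            obtain ⟨h1, h2, h3⟩ := h
            subst h2 h3
            rfl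
          · rintro ⟨⟨i, j⟩, ⟨⟨a, b⟩, ⟨c, d⟩⟩⟩ h
            rfl
      _ = ∑ pq ∈ Finset.HasAntidiagonal.antidiagonal α,
            (∑ ca ∈ Finset.HasAntidiagonal.antidiagonal pq.1, D ca.1 (E ca.2 x)) *
            (∑ db ∈ Finset.HasAntidiagonal.antidiagonal pq.2, D db.1 (E db.2 y)) := by
          refine Finset.sum_congr rfl fun pq _ => ?_
          rw [Finset.sum_mul_sum, Finset.sum_product]
  · have h1 : Finset.HasAntidiagonal.antidiagonal 1 = {((0:ℕ),(1:ℕ)), (1,0)} := by decide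
    show ∑ ij ∈ Finset.HasAntidiagonal.antidiagonal 1, D ij.1 ∘ₗ E ij.2 = _
    rw [h1, Finset.sum_insert (by decide), Finset.sum_singleton]
    ext z
    simp [hD0, hE0, hD1, hE1, add_comm]

end Aux

section Aux2
variable (k A : Type*) [CommRing k] [CommRing A] [Algebra k A]

def IDer (m : ℕ∞) : Submodule A (Derivation k A A) where
  carrier := {δ | IsIntegrable k A m δ}
  add_mem' := fun h₁ h₂ => h₁.add h₂
  zero_mem' := isIntegrable_zero m
  smul_mem' := fun a δ h => h.smul a

theorem mem_IDer {m : ℕ∞} {δ : Derivation k A A} :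
    δ ∈ IDer k A m ↔ IsIntegrable k A m δ := Iff.rfl

end Aux2


section Main

universe u₁ u₂

variable {k : Type u₁} {L : Type u₂} [CommRing k] [CommRing L] [Algebra k L]

theorem main_aux (P : Ideal L) (hPtop : P ≠ ⊤) (hPunits : ∀ a : L, a ∉ P → IsUnit a)
    (N : Submodule L (Derivation k L L))
    (hNI : ∀ m : ℕ∞, N ≤ IDer k L m)
    [Module (L ⧸ P) (Derivation k L L ⧸ N)]
    (hcompat : ∀ (a : L) (x : Derivation k L L ⧸ N),
      (Ideal.Quotient.mk P a) • x = a • x)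
    (hKnoeth : IsNoetherianRing (L ⧸ P))
    (hfin : Module.Finite L (Derivation k L L)) :
    (LeapSet k L).Finite ∧
    Cardinal.lift.{u₂} (Cardinal.mk (LeapSet k L)) ≤
      Cardinal.lift.{0} (Module.rank (L ⧸ P) (Derivation k L L ⧸ N)) := by
  classical
  haveI hKnontriv : Nontrivial (L ⧸ P) := Ideal.Quotient.nontrivial_iff.mpr hPtop
  have hPscal : ∀ a ∈ P, ∀ d : Derivation k L L, a • d ∈ N := by
    intro a ha d
    have h0 : (Ideal.Quotient.mk P a) = 0 := Ideal.Quotient.eq_zero_iff_mem.mpr ha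
    have h1 := hcompat a (Submodule.Quotient.mk d)
    rw [h0, zero_smul, ← Submodule.Quotient.mk_smul] at h1
    exact (Submodule.Quotient.mk_eq_zero N).mp h1.symm
  haveI hVfinL : Module.Finite L (Derivation k L L ⧸ N) :=
    Module.Finite.of_surjective N.mkQ (Submodule.Quotient.mk_surjective N)
  haveI hVfinK : Module.Finite (L ⧸ P) (Derivation k L L ⧸ N) := by
    obtain ⟨s, hs⟩ := Module.finite_def.mp hVfinL
    refine Module.finite_def.mpr ⟨s, ?_⟩
    rw [eq_top_iff]
    intro x _
    have hx : x ∈ Submodule.span L (↑s) := hs ▸ Submodule.mem_top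
    refine Submodule.span_induction (fun y hy => Submodule.subset_span hy)
      (Submodule.zero_mem _) (fun y z _ _ hy hz => Submodule.add_mem _ hy hz) ?_ hx
    intro b y _ hy
    rw [← hcompat b y]
    exact Submodule.smul_mem _ _ hy
  have hchoice : ∀ s : LeapSet k L, ∃ δ : Derivation k L L,
      IsIntegrable k L (((s : ℕ) - 1 : ℕ) : ℕ∞) δ ∧ ¬ IsIntegrable k L ((s : ℕ) : ℕ∞) δ :=
    fun s => s.2.2
  choose δ hδ1 hδ2 using hchoice
  let v : LeapSet k L → (Derivation k L L ⧸ N) := fun s => N.mkQ (δ s)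
  have hli : LinearIndependent (L ⧸ P) v := by
    rw [linearIndependent_iff']
    intro t g hg
    by_contra hcon
    push_neg at hcon
    obtain ⟨i0, hi0t, hi0⟩ := hcon
    set T := t.filter (fun i => g i ≠ 0) with hT
    have hTne : T.Nonempty := ⟨i0, Finset.mem_filter.mpr ⟨hi0t, hi0⟩⟩
    set j := T.min' hTne with hj
    have hjT : j ∈ T := T.min'_mem hTne
    have hjt : j ∈ t := (Finset.mem_filter.mp hjT).1
    have hgj : g j ≠ 0 := (Finset.mem_filter.mp hjT).2
    have hlift : ∀ i, ∃ b : L, Ideal.Quotient.mk P b = g i :=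
      fun i => Ideal.Quotient.mk_surjective (g i)
    choose a ha using hlift
    have hsum : (∑ i ∈ t, a i • δ i) ∈ N := by
      have h2 : N.mkQ (∑ i ∈ t, a i • δ i) = 0 := by
        rw [map_sum]
        rw [← hg]
        refine Finset.sum_congr rfl fun i _ => ?_
        rw [map_smul, ← ha i, hcompat]
      rwa [Submodule.mkQ_apply, Submodule.Quotient.mk_eq_zero] at h2
    have hintj : (δ j) ∈ IDer k L (((j : ℕ) : ℕ∞)) := by
      have hmem : a j • δ j ∈ IDer k L (((j : ℕ) : ℕ∞)) := by
        have hsplit : a j • δ j = (∑ i ∈ t, a i • δ i) - ∑ i ∈ t.erase j, a i • δ i := by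
          rw [Finset.sum_erase_eq_sub hjt]
          abel
        rw [hsplit]
        refine Submodule.sub_mem _ (hNI _ hsum) (Submodule.sum_mem _ ?_)
        intro i hi
        obtain ⟨hij, hit⟩ := Finset.mem_erase.mp hi
        by_cases hgi : g i = 0
        · have hiP : a i ∈ P := by
            rw [← Ideal.Quotient.eq_zero_iff_mem, ha i]; exact hgi
          exact hNI _ (hPscal _ hiP _)
        · have hiT : i ∈ T := Finset.mem_filter.mpr ⟨hit, hgi⟩
          have hji : j < i := lt_of_le_of_ne (T.min'_le i hiT) (Ne.symm hij)
          have hji' : (j : ℕ) < (i : ℕ) := hji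
          have h1 : IsIntegrable k L ((((i : ℕ) - 1 : ℕ)) : ℕ∞) (δ i) := hδ1 i
          have h2 : (((j : ℕ) : ℕ)) ≤ ((i : ℕ) - 1 : ℕ) := by omega
          have h2' : (((j : ℕ) : ℕ∞)) ≤ (((i : ℕ) - 1 : ℕ) : ℕ∞) := by exact_mod_cast h2
          exact Submodule.smul_mem _ _ (h1.mono h2')
      have haj : a j ∉ P := by
        intro hmem'
        exact hgj (by rw [← ha j, Ideal.Quotient.eq_zero_iff_mem.mpr hmem'])
      obtain ⟨u, hu⟩ := hPunits (a j) haj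
      have hinv : δ j = (↑u⁻¹ : L) • (a j • δ j) := by
        rw [smul_smul, ← hu, Units.inv_mul, one_smul]
      rw [hinv]
      exact Submodule.smul_mem _ _ hmem
    exact hδ2 j hintj
  haveI : Finite ↥(LeapSet k L) := hli.finite_of_isNoetherian
  exact ⟨Set.finite_coe_iff.mp ‹_›, hli.cardinal_lift_le_rank⟩

end Main

universe u v w

set_option maxHeartbeats 1000000
set_option synthInstance.maxHeartbeats 1000000

/-- **Finiteness of leaps at minimal primes of the Fitting ideal (Theorem 6.1, case 1).**
Let `k` be a Noetherian ring containing a field, `R = k[x₁,…,xₙ]`, `I = ⟨f₁,…,f_r⟩`,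
`A = R/I`, and `𝔭` a minimal prime of the `(n-r)`-Fitting ideal `J_r` of `Ω_{A/k}`
(generated by the images of the `r × r` minors of the Jacobian of `(f₁,…,f_r)`).
Then `Leap_k(A_𝔭)` is finite, of cardinality at most
`dim_K (Der_k(A_𝔭)/𝔭^M Der_k(A_𝔭))`, where `K` is the residue field of `𝔭` and `M` is
the smallest positive integer with `𝔭^M Der_k(A_𝔭) ⊆ IDer_k(A_𝔭)`.
Here `L` is (any realization of) the localization `A_𝔭` and the `K`-structure on the
quotient of `Der_k(A_𝔭)` is given compatibly with its `A_𝔭`-structure. -/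
theorem leaps_finite_at_minimal_prime_of_fitting_ideal
    (k : Type u) [CommRing k] [IsNoetherianRing k]
    (F : Type w) [Field F] [Algebra F k]
    (n r : ℕ) (f : Fin r → MvPolynomial (Fin n) k)
    (I : Ideal (MvPolynomial (Fin n) k)) (hI : I = Ideal.span (Set.range f))
    (J : Ideal (MvPolynomial (Fin n) k ⧸ I))
    (hJ : J = Ideal.span { x | ∃ cols : Fin r → Fin n,
      x = Ideal.Quotient.mk I
        (Matrix.det (Matrix.of fun i j : Fin r => MvPolynomial.pderiv (cols j) (f i))) })
    (𝔭 : Ideal (MvPolynomial (Fin n) k ⧸ I)) [𝔭.IsPrime] (h𝔭 : 𝔭 ∈ J.minimalPrimes)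
    (L : Type v) [CommRing L] [Algebra (MvPolynomial (Fin n) k ⧸ I) L]
    [IsLocalization.AtPrime L 𝔭]
    [Algebra k L] [IsScalarTower k (MvPolynomial (Fin n) k ⧸ I) L]
    (M : ℕ) (hM1 : 1 ≤ M)
    (hM : ∀ a ∈ (𝔭.map (algebraMap (MvPolynomial (Fin n) k ⧸ I) L)) ^ M,
      ∀ d : Derivation k L L, IsIntegrable k L ⊤ (a • d))
    (hMmin : ∀ M' : ℕ, 1 ≤ M' → M' < M →
      ¬ (∀ a ∈ (𝔭.map (algebraMap (MvPolynomial (Fin n) k ⧸ I) L)) ^ M',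
        ∀ d : Derivation k L L, IsIntegrable k L ⊤ (a • d)))
    -- the residue-field structure on `Der_k(A_𝔭)/𝔭^M Der_k(A_𝔭)`:
    [Module (L ⧸ 𝔭.map (algebraMap (MvPolynomial (Fin n) k ⧸ I) L))
      (Derivation k L L ⧸ (((𝔭.map (algebraMap (MvPolynomial (Fin n) k ⧸ I) L)) ^ M) •
        (⊤ : Submodule L (Derivation k L L))))]
    (hcompat : ∀ (a : L)
      (x : Derivation k L L ⧸ (((𝔭.map (algebraMap (MvPolynomial (Fin n) k ⧸ I) L)) ^ M) •
        (⊤ : Submodule L (Derivation k L L)))),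
      (Ideal.Quotient.mk (𝔭.map (algebraMap (MvPolynomial (Fin n) k ⧸ I) L)) a) • x
        = a • x) :
    (LeapSet k L).Finite ∧
    Cardinal.lift.{v} (Cardinal.mk (LeapSet k L)) ≤
      Cardinal.lift.{0}
        (Module.rank (L ⧸ 𝔭.map (algebraMap (MvPolynomial (Fin n) k ⧸ I) L))
          (Derivation k L L ⧸ (((𝔭.map (algebraMap (MvPolynomial (Fin n) k ⧸ I) L)) ^ M) •
            (⊤ : Submodule L (Derivation k L L))))) := by
  classical
  -- Noetherian instances
  haveI hQnoeth : IsNoetherianRing (MvPolynomial (Fin n) k ⧸ I) :=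
    isNoetherianRing_of_surjective (MvPolynomial (Fin n) k) _ (Ideal.Quotient.mk I)
      Ideal.Quotient.mk_surjective
  haveI hLnoeth : IsNoetherianRing L := IsLocalization.isNoetherianRing 𝔭.primeCompl L hQnoeth
  haveI hLloc : IsLocalRing L := IsLocalization.AtPrime.isLocalRing L 𝔭
  have hPmax : 𝔭.map (algebraMap (MvPolynomial (Fin n) k ⧸ I) L) = IsLocalRing.maximalIdeal L := by
    rw [← IsLocalization.AtPrime.comap_maximalIdeal L 𝔭,
      IsLocalization.map_comap 𝔭.primeCompl L]
  haveI hPisMax : (𝔭.map (algebraMap (MvPolynomial (Fin n) k ⧸ I) L)).IsMaximal :=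
    hPmax ▸ IsLocalRing.maximalIdeal.isMaximal L
  haveI hKnoeth : IsNoetherianRing (L ⧸ 𝔭.map (algebraMap (MvPolynomial (Fin n) k ⧸ I) L)) :=
    isNoetherianRing_of_surjective L _ (Ideal.Quotient.mk _) Ideal.Quotient.mk_surjective
  -- derivations are determined by their values on the variables
  have key : ∀ (δ : Derivation k L L),
      (∀ i : Fin n, δ (algebraMap (MvPolynomial (Fin n) k ⧸ I) L
        (Ideal.Quotient.mk I (MvPolynomial.X i))) = 0) → δ = 0 := by
    intro δ hδ
    have hQ : ∀ q : MvPolynomial (Fin n) k ⧸ I,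
        δ (algebraMap (MvPolynomial (Fin n) k ⧸ I) L q) = 0 := by
      intro q
      obtain ⟨p, rfl⟩ := Ideal.Quotient.mk_surjective q
      induction p using MvPolynomial.induction_on with
      | C c =>
        have h1 : Ideal.Quotient.mk I (MvPolynomial.C c)
            = algebraMap k (MvPolynomial (Fin n) k ⧸ I) c := by
          rw [IsScalarTower.algebraMap_apply k (MvPolynomial (Fin n) k)
            (MvPolynomial (Fin n) k ⧸ I), MvPolynomial.algebraMap_eq,
            Ideal.Quotient.algebraMap_eq]
        rw [h1, ← IsScalarTower.algebraMap_apply k (MvPolynomial (Fin n) k ⧸ I) L]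
        exact δ.map_algebraMap c
      | add p q hp hq => rw [map_add, map_add, map_add, hp, hq, add_zero]
      | mul_X p i hp =>
        rw [map_mul, map_mul, δ.leibniz, hp, hδ i, smul_zero, smul_zero, add_zero]
    have hz : ∀ z : L, δ z = 0 := by
      intro z
      obtain ⟨⟨x, s⟩, hmk⟩ := IsLocalization.mk'_surjective 𝔭.primeCompl z
      have hspec : z * algebraMap (MvPolynomial (Fin n) k ⧸ I) L s
          = algebraMap (MvPolynomial (Fin n) k ⧸ I) L x := by
        rw [← hmk]; exact IsLocalization.mk'_spec L x s
      have h0 := congrArg δ hspec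
      rw [δ.leibniz, hQ, hQ, smul_zero, zero_add, smul_eq_mul] at h0
      have hu : IsUnit (algebraMap (MvPolynomial (Fin n) k ⧸ I) L s) :=
        IsLocalization.map_units L s
      obtain ⟨u, hu'⟩ := hu
      have := congrArg (fun w => (↑u⁻¹ : L) * w) h0
      simp only [mul_zero] at this
      rw [← mul_assoc, ← hu', Units.inv_mul, one_mul] at this
      exact this
    ext z; exact hz z
  -- the evaluation map on variables
  let ev : Derivation k L L →ₗ[L] (Fin n → L) :=
    { toFun := fun δ i => δ (algebraMap (MvPolynomial (Fin n) k ⧸ I) L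
        (Ideal.Quotient.mk I (MvPolynomial.X i)))
      map_add' := fun δ₁ δ₂ => rfl
      map_smul' := fun a δ₁ => rfl }
  have hevinj : Function.Injective ev := by
    intro δ₁ δ₂ h
    rw [← sub_eq_zero]
    refine key _ fun i => ?_
    have h2 := congrFun h i
    simp only [ev, LinearMap.coe_mk, AddHom.coe_mk] at h2
    rw [Derivation.sub_apply, h2, sub_self]
  haveI hDerNoeth : IsNoetherian L (Derivation k L L) :=
    isNoetherian_of_injective ev hevinj
  have hfin : Module.Finite L (Derivation k L L) :=
    Module.finite_def.mpr (IsNoetherian.noetherian ⊤)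
  -- apply the main lemma
  refine main_aux (𝔭.map (algebraMap (MvPolynomial (Fin n) k ⧸ I) L)) hPisMax.ne_top
    (fun a ha => ?_) _ (fun m => ?_) hcompat hKnoeth hfin
  · by_contra hnu
    exact ha (hPmax ▸ hnu)
  · rw [Submodule.smul_le]
    intro c hc d _
    exact (hM c hc d).mono le_top
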